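/- arXiv:1406.7472 — 3 statements merged into one kernel-verified Lean document; each statement's English description precedes it below -/
import Mathlib

section
/- A local ring R is uniquely π-clean if and only if J(R) = { x ∈ R : xᵐ − 1 is a unit for all m ≥ 1 }. -/
/-- An element `a` is uniquely clean if it can be uniquely written as the
sum of an idempotent and a unit. -/
def UniquelyCleanElem {R : Type*} [Ring R] (a : R) : Prop :=
  ∃! e : R, IsIdempotentElem e ∧ IsUnit (a - e)

/-- A ring is uniquely π-clean if some power of every element is uniquely clean. -/
def UniquelyPiClean (R : Type*) [Ring R] : Prop :=
  ∀ a : R, ∃ n : ℕ, 1 ≤ n ∧ UniquelyCleanElem (a ^ n)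

/-- A ring is abelian if every idempotent is central. -/
def AbelianRing (R : Type*) [Ring R] : Prop :=
  ∀ e : R, IsIdempotentElem e → ∀ x : R, e * x = x * e

section Aux
variable {R : Type*} [Ring R] [IsLocalRing R]

lemma myOr (a : R) : IsUnit a ∨ IsUnit (1 - a) :=
  IsLocalRing.isUnit_or_isUnit_of_add_one (by abel)

lemma myIdem01 {e : R} (he : IsIdempotentElem e) : e = 0 ∨ e = 1 := by
  rcases myOr e with h | h
  · right
    exact h.mul_left_cancel (by rw [mul_one]; exact he)
  · left
    have h1 : (1 - e) = 1 := h.mul_left_cancel (by rw [mul_one]; exact he.one_sub)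
    exact sub_eq_self.mp h1

lemma myUnitOfLeftInv {x t : R} (h : t * x = 1) : IsUnit x := by
  have hid : IsIdempotentElem (x * t) := by
    unfold IsIdempotentElem
    rw [mul_assoc, ← mul_assoc t, h, one_mul]
  rcases myIdem01 hid with h0 | h1
  · have hx : x = 0 := by
      have : x * (t * x) = x := by rw [h, mul_one]
      rw [← mul_assoc, h0, zero_mul] at this
      exact this.symm
    rw [hx, mul_zero] at h
    exact absurd h.symm one_ne_zero
  · exact ⟨⟨x, t, h1, h⟩, rfl⟩

lemma myMemJacobson {x : R} : x ∈ (⊥ : Ideal R).jacobson ↔ ¬ IsUnit x := by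
  set N : Ideal R :=
    { carrier := {x : R | ¬ IsUnit x}
      zero_mem' := by simp [not_isUnit_zero]
      add_mem' := by
        intro a b ha hb hab
        rcases hab with ⟨u, hu⟩
        have h1 : (↑u⁻¹ * a) + (↑u⁻¹ * b) = 1 := by
          rw [← mul_add, ← hu]; exact u.inv_mul
        rcases myOr (↑u⁻¹ * a) with h | h
        · exact ha (by
            have : a = ↑u * (↑u⁻¹ * a) := by rw [← mul_assoc, u.mul_inv, one_mul]
            rw [this]; exact u.isUnit.mul h)
        · have hb' : (1 : R) - ↑u⁻¹ * a = ↑u⁻¹ * b := (eq_sub_of_add_eq' h1).symm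
          rw [hb'] at h
          exact hb (by
            have : b = ↑u * (↑u⁻¹ * b) := by rw [← mul_assoc, u.mul_inv, one_mul]
            rw [this]; exact u.isUnit.mul h)
      smul_mem' := by
        intro c x hx hcx
        rw [smul_eq_mul] at hcx
        rcases hcx with ⟨u, hu⟩
        apply hx
        apply myUnitOfLeftInv (t := ↑u⁻¹ * c)
        rw [mul_assoc, ← hu, u.inv_mul] } with hN
  have hNtop : N ≠ ⊤ := by
    intro h
    have : (1 : R) ∈ N := h ▸ Submodule.mem_top
    exact this isUnit_one
  constructor
  · intro hx hux
    obtain ⟨M, hM⟩ := Ideal.exists_maximal R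
    have : x ∈ M := (sInf_le ⟨bot_le, hM⟩ : (⊥ : Ideal R).jacobson ≤ M) hx
    exact hM.ne_top (M.eq_top_of_isUnit_mem this hux)
  · intro hx
    apply Ideal.mem_sInf.mpr
    rintro J ⟨-, hJ⟩
    have hJN : J ≤ N := by
      intro y hy hyu
      exact hJ.ne_top (J.eq_top_of_isUnit_mem hy hyu)
    have : J = N := hJ.eq_of_le hNtop hJN
    rw [this]; exact hx

lemma myNonunitSubOne {x : R} (hx : ¬ IsUnit x) : IsUnit (x - 1) := by
  rcases myOr x with h | h
  · exact absurd h hx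
  · have h2 : x - 1 = -(1 - x) := (neg_sub 1 x).symm
    rw [h2]; exact h.neg

lemma myPowUnit {x : R} {m : ℕ} (hm : 1 ≤ m) (h : IsUnit (x ^ m)) : IsUnit x := by
  rcases h with ⟨u, hu⟩
  apply myUnitOfLeftInv (t := ↑u⁻¹ * x ^ (m - 1))
  rw [mul_assoc, ← pow_succ, Nat.sub_add_cancel hm, ← hu, u.inv_mul]

end Aux

theorem stmt11 {R : Type*} [Ring R] [IsLocalRing R] :
    UniquelyPiClean R ↔
      (∀ x : R, x ∈ (⊥ : Ideal R).jacobson ↔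
        ∀ m : ℕ, 1 ≤ m → IsUnit (x ^ m - 1)) := by
  constructor
  · intro h x
    constructor
    · intro hx m hm
      have hxu : ¬ IsUnit x := myMemJacobson.mp hx
      have hpow : ¬ IsUnit (x ^ m) := fun hp => hxu (myPowUnit hm hp)
      exact myNonunitSubOne hpow
    · intro hx
      rw [myMemJacobson]
      intro hux
      obtain ⟨n, hn1, e, ⟨heid, heu⟩, huniq⟩ := h x
      have h0 : (0 : R) = e := huniq 0 ⟨IsIdempotentElem.zero, by rw [sub_zero]; exact hux.pow n⟩
      have h1 : (1 : R) = e := huniq 1 ⟨IsIdempotentElem.one, hx n hn1⟩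
      exact one_ne_zero (h1.trans h0.symm)
  · intro h a
    by_cases ha : IsUnit a
    · have hnJ : a ∉ (⊥ : Ideal R).jacobson := fun hJ => (myMemJacobson.mp hJ) ha
      have : ¬ ∀ m : ℕ, 1 ≤ m → IsUnit (a ^ m - 1) := fun hm => hnJ ((h a).mpr hm)
      push_neg at this
      obtain ⟨m, hm1, hmu⟩ := this
      refine ⟨m, hm1, 0, ⟨IsIdempotentElem.zero, by rw [sub_zero]; exact ha.pow m⟩, ?_⟩
      intro y ⟨hyid, hyu⟩
      rcases myIdem01 hyid with h0 | h1
      · exact h0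
      · rw [h1] at hyu
        exact absurd hyu hmu
    · refine ⟨1, le_refl 1, 1, ⟨IsIdempotentElem.one, by rw [pow_one]; exact myNonunitSubOne ha⟩, ?_⟩
      intro y ⟨hyid, hyu⟩
      rcases myIdem01 hyid with h0 | h1
      · rw [h0, sub_zero, pow_one] at hyu
        exact absurd hyu ha
      · exact h1
end

section
/- Every potently J-clean ring is an exchange ring. -/
/-- A ring is an exchange ring if for every a there is an idempotent
e ∈ aR with 1 - e ∈ (1 - a)R. -/
def ExchangeRing (R : Type*) [Ring R] : Prop :=
  ∀ a : R, ∃ e : R, IsIdempotentElem e ∧ (∃ r : R, e = a * r) ∧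
    (∃ s : R, 1 - e = (1 - a) * s)


/-- A ring is potently J-clean if every element is the sum of a potent
element and an element of the Jacobson radical. -/
def PotentlyJClean (R : Type*) [Ring R] : Prop :=
  ∀ a : R, ∃ p : R, (∃ n : ℕ, 2 ≤ n ∧ p ^ n = p) ∧ a - p ∈ (⊥ : Ideal R).jacobson



section Aux

variable {R : Type*} [Ring R]

private lemma isUnit_one_add_jac {x : R} (hx : x ∈ (⊥ : Ideal R).jacobson) :
    IsUnit (1 + x) := by
  obtain ⟨z, hz⟩ := Ideal.mem_jacobson_iff.mp hx 1
  rw [Ideal.mem_bot] at hz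
  have hsum : z * x + z = 1 := by
    have h1 : z * 1 * x + z - 1 = 0 := hz
    rw [mul_one] at h1
    have := congrArg (· + 1) h1
    simpa using this
  have hz1 : z * (1 + x) = 1 := by
    calc z * (1 + x) = z * x + z := by noncomm_ring
    _ = 1 := hsum
  have hzeq : z = 1 + -(z * x) := by
    calc z = (z * x + z) + -(z * x) := by abel
    _ = 1 + -(z * x) := by rw [hsum]
  have hzx : -(z * x) ∈ (⊥ : Ideal R).jacobson := neg_mem (Ideal.mul_mem_left _ _ hx)
  obtain ⟨z', hz'⟩ := Ideal.mem_jacobson_iff.mp hzx 1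
  rw [Ideal.mem_bot] at hz'
  have hz'1 : z' * z = 1 := by
    have h1 : z' * 1 * -(z * x) + z' - 1 = 0 := hz'
    rw [mul_one] at h1
    have h2 : z' * -(z * x) + z' = 1 := by
      have := congrArg (· + 1) h1
      simpa using this
    calc z' * z = z' * (1 + -(z * x)) := by rw [← hzeq]
    _ = z' * -(z * x) + z' := by noncomm_ring
    _ = 1 := h2
  have hxz' : 1 + x = z' := by
    calc 1 + x = 1 * (1 + x) := by rw [one_mul]
    _ = (z' * z) * (1 + x) := by rw [hz'1]
    _ = z' * (z * (1 + x)) := by rw [mul_assoc]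
    _ = z' := by rw [hz1, mul_one]
  refine ⟨⟨1 + x, z, ?_, hz1⟩, rfl⟩
  rw [hxz']; exact hz'1

private lemma isUnit_one_add_jac_mul {t : R} (ht : t ∈ (⊥ : Ideal R).jacobson) (r : R) :
    IsUnit (1 + t * r) := by
  obtain ⟨u, hu⟩ := isUnit_one_add_jac (Ideal.mul_mem_left _ r ht)
  set q := ((u⁻¹ : Rˣ) : R) with hq
  have hq1 : q * (1 + r * t) = 1 := by rw [hq, ← hu]; exact u.inv_mul
  have hq2 : (1 + r * t) * q = 1 := by rw [hq, ← hu]; exact u.mul_inv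
  refine ⟨⟨1 + t * r, 1 - t * q * r, ?_, ?_⟩, rfl⟩
  · have e1 : (1 + t * r) * (1 - t * q * r)
        = 1 + t * r - t * (((1 + r * t) * q) * r) := by noncomm_ring
    rw [e1, hq2]; noncomm_ring
  · have e2 : (1 - t * q * r) * (1 + t * r)
        = 1 + t * r - t * ((q * (1 + r * t)) * r) := by noncomm_ring
    rw [e2, hq1]; noncomm_ring

private lemma jac_mul_right {x : R} (hx : x ∈ (⊥ : Ideal R).jacobson) (r : R) :
    x * r ∈ (⊥ : Ideal R).jacobson := by
  rw [Ideal.jacobson, Ideal.mem_sInf]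
  intro M hM
  by_contra hmem
  have hM' : M.IsMaximal := hM.2
  have hxrin : x * r ∈ M ⊔ Ideal.span {x * r} :=
    Submodule.mem_sup_right (Ideal.subset_span (Set.mem_singleton _))
  have hlt : M < M ⊔ Ideal.span {x * r} :=
    lt_of_le_of_ne le_sup_left fun hEq => hmem (by rw [hEq]; exact hxrin)
  have htop : M ⊔ Ideal.span {x * r} = ⊤ := hM'.1.2 _ hlt
  have h1 : (1 : R) ∈ M ⊔ Ideal.span {x * r} := by rw [htop]; exact Submodule.mem_top
  obtain ⟨m, hm, c, hc, hmc⟩ := Submodule.mem_sup.mp h1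
  obtain ⟨s, hs⟩ := Ideal.mem_span_singleton'.mp hc
  have ht : -(s * x) ∈ (⊥ : Ideal R).jacobson := neg_mem (Ideal.mul_mem_left _ _ hx)
  have hmu : IsUnit m := by
    have : m = 1 + (-(s * x)) * r := by
      have hmeq : m = 1 - c := by
        calc m = (m + c) + -c := by abel
        _ = 1 - c := by rw [hmc]; noncomm_ring
      rw [hmeq, ← hs]; noncomm_ring
    rw [this]
    exact isUnit_one_add_jac_mul ht r
  exact hM'.ne_top (M.eq_top_of_isUnit_mem hm hmu)

private lemma isUnit_add_jac {v x : R} (hv : IsUnit v) (hx : x ∈ (⊥ : Ideal R).jacobson) :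
    IsUnit (v + x) := by
  obtain ⟨u, rfl⟩ := hv
  have h1 : ((u⁻¹ : Rˣ) : R) * x ∈ (⊥ : Ideal R).jacobson := Ideal.mul_mem_left _ _ hx
  have h2 : IsUnit (1 + (u⁻¹ : Rˣ) * x) := isUnit_one_add_jac h1
  have key : (u : R) + x = u * (1 + (u⁻¹ : Rˣ) * x) := by
    rw [mul_add, mul_one, ← mul_assoc, Units.mul_inv, one_mul]
  rw [key]
  exact u.isUnit.mul h2

end Aux


theorem stmt14 {R : Type*} [Ring R] (h : PotentlyJClean R) : ExchangeRing R := by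
  intro a
  obtain ⟨p, ⟨n, hn2, hpn⟩, hj⟩ := h a
  set J := (⊥ : Ideal R).jacobson with hJ
  obtain ⟨m, rfl⟩ : ∃ m, n = m + 1 := ⟨n - 1, by omega⟩
  have hm1 : 1 ≤ m := by omega
  have he : IsIdempotentElem (p ^ m) := by
    unfold IsIdempotentElem
    have h1 : p ^ m * p ^ m = p ^ (m - 1) * p ^ (m + 1) := by
      rw [← pow_add, ← pow_add]; congr 1; omega
    rw [h1, hpn, ← pow_succ]
    congr 1; omega
  set e := p ^ m with hedef
  have hbm : ∀ k : ℕ, a ^ k - p ^ k ∈ J := by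
    intro k
    induction k with
    | zero => simp
    | succ k ih =>
      have key : a ^ (k + 1) - p ^ (k + 1) = a * (a ^ k - p ^ k) + (a - p) * p ^ k := by
        rw [pow_succ' a, pow_succ' p]
        generalize a ^ k = A
        generalize p ^ k = P
        noncomm_ring
      rw [key]
      exact J.add_mem (Ideal.mul_mem_left _ _ ih) (jac_mul_right hj _)
  set b := a ^ m with hbdef
  have hj' : b - e ∈ J := hbm m
  set v := e - 1 + b with hvdef
  have hvu : IsUnit v := by
    have h2e : IsUnit (2 * e - 1) := by
      have hsq : (2 * e - 1) * (2 * e - 1) = 1 := by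
        have : (2 * e - 1) * (2 * e - 1) = 4 * (e * e) - 4 * e + 1 := by noncomm_ring
        rw [this, he]; noncomm_ring
      exact ⟨⟨2 * e - 1, 2 * e - 1, hsq, hsq⟩, rfl⟩
    have hveq : v = (2 * e - 1) + (b - e) := by rw [hvdef]; noncomm_ring
    rw [hveq]
    exact isUnit_add_jac h2e hj'
  obtain ⟨u, hu⟩ := hvu
  set w := ((u⁻¹ : Rˣ) : R) with hwdef
  have hwv : w * v = 1 := by rw [hwdef, ← hu]; exact u.inv_mul
  have hvw : v * w = 1 := by rw [hwdef, ← hu]; exact u.mul_inv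
  refine ⟨v * e * w, ?_, ?_, ?_⟩
  · unfold IsIdempotentElem
    calc v * e * w * (v * e * w) = v * e * (w * v) * (e * w) := by noncomm_ring
    _ = v * (e * e) * w := by rw [hwv]; noncomm_ring
    _ = v * e * w := by rw [he]
  · have hve : v * e = b * e := by
      have h1 : v * e = e * e - e + b * e := by rw [hvdef]; noncomm_ring
      rw [h1, he]; noncomm_ring
    refine ⟨a ^ (m - 1) * e * w, ?_⟩
    have h2 : a ^ m = a * a ^ (m - 1) := by
      rw [← pow_succ']; congr 1; omega
    rw [hve, hbdef, h2]
    noncomm_ring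
  · have h1E : 1 - v * e * w = v * (1 - e) * w := by
      have h3 : v * (1 - e) * w = v * w - v * e * w := by noncomm_ring
      rw [h3, hvw]
    have hv1e : v * (1 - e) = (1 - b) * (-(1 - e)) := by
      have h4 : v * (1 - e) = e - e * e - 1 + e + b - b * e := by rw [hvdef]; noncomm_ring
      rw [h4, he]; noncomm_ring
    have hbgeom : 1 - b = (1 - a) * ∑ i ∈ Finset.range m, a ^ i := by
      have h5 := mul_geom_sum a m
      have h6 : (1 - a) * ∑ i ∈ Finset.range m, a ^ i
          = -((a - 1) * ∑ i ∈ Finset.range m, a ^ i) := by noncomm_ring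
      rw [h6, h5, hbdef]; noncomm_ring
    refine ⟨(∑ i ∈ Finset.range m, a ^ i) * (-(1 - e)) * w, ?_⟩
    rw [h1E, hv1e, hbgeom]
    noncomm_ring
end

section
/- A ring R is uniquely π-clean with nil Jacobson radical if and only if R is an abelian periodic ring. -/
/-- A ring is periodic if for every a there exist distinct positive
integers m, n with a^m = a^n. -/
def PeriodicRing (R : Type*) [Ring R] : Prop :=
  ∀ a : R, ∃ m n : ℕ, 1 ≤ m ∧ 1 ≤ n ∧ m ≠ n ∧ a ^ m = a ^ n

/-!
A periodic element has an idempotent power `g`, and `g = (1 - g) + (2g - 1)` is the only clean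
decomposition of `g` once idempotents commute; a periodic element `x` of the Jacobson radical is
nilpotent because `1 - x ^ d` is left invertible.

Conversely, if an idempotent `e` is uniquely clean then `e x (1 - e) = 0`, since otherwise
`e + e x (1 - e)` would give a second decomposition; so the ring is abelian, hence Dedekind-finite.
Let `b = e + u` be uniquely clean and `M` a maximal left ideal. As `e` is central we may assume
`e ∈ M`. If `1 - b ∉ M`, the clean decomposition of a power of a left inverse of `b - 1` modulo
`M` yields an idempotent `f ∈ M` such that `b - 1` is invertible in the corner ring of
`p = (1 - e)(1 - f)`; then `b - (e + p)` is a unit, uniqueness forces `p = 0`, and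
`1 = e + (1 - e) f ∈ M`. Hence `b - b²` lies in every maximal left ideal and is nilpotent.

For `b = 2 ^ n` this gives a characteristic `q ≠ 0`, and in characteristic `q` one has
`(1 + x) ^ q ^ j ≡ 1` modulo `x ^ 2 ^ j`, so `(b (b - 1)) ^ k = 0` gives `b ^ (k + q ^ k) = b ^ k`:
every element has a periodic power.
-/

def IsPeriodicElem {M : Type*} [Monoid M] (a : M) : Prop :=
  ∃ m d : ℕ, 0 < m ∧ 0 < d ∧ a ^ (m + d) = a ^ m

section Monoid

variable {M : Type*} [Monoid M] {a : M}

lemma pow_add_add_mul_eq_pow_add {m d : ℕ} (h : a ^ (m + d) = a ^ m) (j c : ℕ) :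
    a ^ (m + j + c * d) = a ^ (m + j) := by
  induction c with
  | zero => simp
  | succ c ih =>
    calc a ^ (m + j + (c + 1) * d) = a ^ (m + d) * a ^ (j + c * d) := by rw [← pow_add]; ring_nf
      _ = a ^ (m + j) := by rw [h, ← pow_add, ← ih]; ring_nf

lemma IsPeriodicElem.exists_isIdempotentElem_pow (h : IsPeriodicElem a) :
    ∃ t, 0 < t ∧ IsIdempotentElem (a ^ t) := by
  obtain ⟨m, d, hm, hd, h⟩ := h
  obtain ⟨j, hj⟩ := Nat.exists_eq_add_of_le (Nat.le_mul_of_pos_right m hd)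
  refine ⟨m * d, Nat.mul_pos hm hd, ?_⟩
  rw [IsIdempotentElem, ← pow_add, hj, ← pow_add_add_mul_eq_pow_add h j m, ← hj, mul_comm]

lemma IsPeriodicElem.of_pow {n : ℕ} (hn : 0 < n) (h : IsPeriodicElem (a ^ n)) :
    IsPeriodicElem a := by
  obtain ⟨m, d, hm, hd, h⟩ := h
  refine ⟨n * m, n * d, Nat.mul_pos hn hm, Nat.mul_pos hn hd, ?_⟩
  rwa [← mul_add, pow_mul, pow_mul]

end Monoid

section Ring

variable {R : Type*} [Ring R]

lemma periodicRing_iff : PeriodicRing R ↔ ∀ a : R, IsPeriodicElem a := by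
  refine ⟨fun h a => ?_, fun h a => ?_⟩
  · obtain ⟨m, n, hm, hn, hmn, h⟩ := h a
    rcases Nat.lt_or_gt_of_ne hmn with hlt | hlt
    · exact ⟨m, n - m, hm, by omega, by rw [Nat.add_sub_cancel' hlt.le, h]⟩
    · exact ⟨n, m - n, hn, by omega, by rw [Nat.add_sub_cancel' hlt.le, h]⟩
  · obtain ⟨m, d, hm, hd, h⟩ := h a
    exact ⟨m + d, m, by omega, hm, by omega, h⟩

lemma IsPeriodicElem.isNilpotent_of_mem_jacobson {x : R} (h : IsPeriodicElem x)
    (hx : x ∈ (⊥ : Ideal R).jacobson) : IsNilpotent x := by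
  obtain ⟨m, d, -, hd, h⟩ := h
  obtain ⟨s, hs⟩ := Ideal.exists_mul_add_sub_mem_of_mem_jacobson _
    (neg_mem (Ideal.pow_mem_of_mem _ hx d hd))
  rw [Ideal.mem_bot, sub_eq_zero, neg_add_eq_sub] at hs
  refine ⟨m, ?_⟩
  calc x ^ m = s * (1 - x ^ d) * x ^ m := by rw [hs, one_mul]
    _ = 0 := by rw [mul_assoc, sub_mul, one_mul, ← pow_add, add_comm, h, sub_self, mul_zero]

lemma IsIdempotentElem.isUnit_sub_one_sub {e : R} (he : IsIdempotentElem e) :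
    IsUnit (e - (1 - e)) := by
  have h : (e - (1 - e)) * (e - (1 - e)) = 1 := by
    calc _ = 4 * (e * e) - 4 * e + 1 := by noncomm_ring
      _ = 1 := by rw [he.eq]; noncomm_ring
  exact ⟨⟨_, _, h, h⟩, rfl⟩

lemma IsIdempotentElem.eq_one_sub_of_isUnit_sub {g h : R} (hg : IsIdempotentElem g)
    (hh : IsIdempotentElem h) (hgh : Commute g h) (hu : IsUnit (g - h)) : h = 1 - g := by
  have h₁ : g * h = 0 := hu.mul_right_eq_zero.1 <| by
    rw [sub_mul, ← mul_assoc, hg.eq, ← mul_assoc, ← hgh.eq, mul_assoc, hh.eq, sub_self]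
  have hc : h * (1 - g) = (1 - g) * h := ((Commute.one_right h).sub_right hgh.symm).eq
  have h₂ : (1 - g) * (1 - h) = 0 := hu.mul_right_eq_zero.1 <| by
    rw [sub_mul, ← mul_assoc, hg.mul_one_sub_self, zero_mul, ← mul_assoc, hc, mul_assoc,
      hh.mul_one_sub_self, mul_zero, sub_zero]
  calc h = h + (1 - g) * (1 - h) - g * h := by rw [h₁, h₂, add_zero, sub_zero]
    _ = 1 - g := by noncomm_ring

lemma AbelianRing.uniquelyCleanElem_of_isIdempotentElem (hab : AbelianRing R) {g : R}
    (hg : IsIdempotentElem g) : UniquelyCleanElem g :=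
  ⟨1 - g, ⟨hg.one_sub, hg.isUnit_sub_one_sub⟩,
    fun _ ⟨hh, hu⟩ => hg.eq_one_sub_of_isUnit_sub hh (hab g hg _) hu⟩

lemma uniquelyPiClean_of_abelianRing_of_periodicRing (hab : AbelianRing R)
    (hper : PeriodicRing R) : UniquelyPiClean R := fun a => by
  obtain ⟨t, ht, hg⟩ := (periodicRing_iff.1 hper a).exists_isIdempotentElem_pow
  exact ⟨t, ht, hab.uniquelyCleanElem_of_isIdempotentElem hg⟩

lemma UniquelyCleanElem.one_sub {a : R} (h : UniquelyCleanElem a) :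
    UniquelyCleanElem (1 - a) := by
  obtain ⟨e, ⟨he, hu⟩, huniq⟩ := h
  refine ⟨1 - e, ⟨he.one_sub, ?_⟩, fun f ⟨hf, hfu⟩ => ?_⟩
  · rw [sub_sub_sub_cancel_left, ← neg_sub]
    exact hu.neg
  · have hfu' : IsUnit (a - (1 - f)) := by
      rw [show a - (1 - f) = -(1 - a - f) by noncomm_ring]
      exact hfu.neg
    rw [← huniq (1 - f) ⟨hf.one_sub, hfu'⟩, sub_sub_cancel]

lemma UniquelyCleanElem.eq_zero_of_mul_eq {e ν : R} (he : IsIdempotentElem e)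
    (h : UniquelyCleanElem e) (heν : e * ν = ν) (hνe : ν * e = 0) : ν = 0 := by
  have hνν : ν * ν = 0 := by
    calc ν * ν = ν * e * ν := by rw [mul_assoc, heν]
      _ = 0 := by rw [hνe, zero_mul]
  have hidem : IsIdempotentElem (e + ν) := by
    rw [IsIdempotentElem, add_mul, mul_add, mul_add, he.eq, heν, hνe, hνν, add_zero, add_zero]
  have hu : IsUnit (e - (1 - (e + ν))) := by
    have hν : IsNilpotent ν := ⟨2, by rw [pow_two, hνν]⟩
    rw [show e - (1 - (e + ν)) = (e - (1 - e)) * (1 + ν) by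
      calc _ = e - (1 - e) + (2 * (e * ν) - ν) := by rw [heν]; noncomm_ring
        _ = _ := by noncomm_ring]
    exact he.isUnit_sub_one_sub.mul hν.isUnit_one_add
  have := ExistsUnique.unique h ⟨he.one_sub, he.isUnit_sub_one_sub⟩ ⟨hidem.one_sub, hu⟩
  rwa [sub_right_inj, left_eq_add] at this

lemma UniquelyCleanElem.mul_mul_one_sub_eq_zero {e : R} (he : IsIdempotentElem e)
    (h : UniquelyCleanElem e) (x : R) : e * x * (1 - e) = 0 :=
  h.eq_zero_of_mul_eq he (by rw [← mul_assoc, ← mul_assoc, he.eq])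
    (by rw [mul_assoc, he.one_sub_mul_self, mul_zero])

lemma abelianRing_of_uniquelyPiClean (h : UniquelyPiClean R) : AbelianRing R := by
  intro e he x
  obtain ⟨n, hn, hen⟩ := h e
  rw [he.pow_eq (by omega)] at hen
  have h₁ := hen.mul_mul_one_sub_eq_zero he x
  have h₂ := hen.one_sub.mul_mul_one_sub_eq_zero he.one_sub x
  rw [sub_sub_cancel, sub_mul, sub_mul, one_mul, sub_eq_zero] at h₂
  rw [mul_sub, mul_one, sub_eq_zero] at h₁
  rw [h₁, h₂]

lemma AbelianRing.isDedekindFiniteMonoid (hab : AbelianRing R) : IsDedekindFiniteMonoid R where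
  mul_eq_one_symm {a b} h := by
    have hba : IsIdempotentElem (b * a) := by
      rw [IsIdempotentElem, mul_assoc, ← mul_assoc a, h, one_mul]
    calc b * a = b * a * a * b := by rw [mul_assoc _ a b, h, mul_one]
      _ = a * (b * a) * b := by rw [hab _ hba a]
      _ = 1 := by rw [← mul_assoc a b a, h, one_mul, h]

lemma isUnit_of_isUnit_mul_add_one_sub {p a : R} (hp : IsIdempotentElem p)
    (hpc : ∀ x, p * x = x * p) (h₁ : IsUnit (a * p + (1 - p)))
    (h₂ : IsUnit (a * (1 - p) + p)) : IsUnit a := by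
  have hpc' : (1 - p) * a = a * (1 - p) := by rw [sub_mul, mul_sub, one_mul, mul_one, hpc]
  have : (a * p + (1 - p)) * (a * (1 - p) + p) = a := by
    calc _ = a * (p * a) * (1 - p) + a * (p * p) + (1 - p) * a * (1 - p) + (1 - p) * p := by
          noncomm_ring
      _ = a * a * (p * (1 - p)) + a * p + a * ((1 - p) * (1 - p)) + (1 - p) * p := by
          rw [hpc a, hp.eq, hpc']; noncomm_ring
      _ = a := by rw [hp.mul_one_sub_self, hp.one_sub.eq, hp.one_sub_mul_self]; noncomm_ring
  exact this ▸ h₁.mul h₂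

lemma AbelianRing.isUnit_mul_add_one_sub (hab : AbelianRing R) {p a g : R}
    (hp : IsIdempotentElem p) (h : g * a * p = p) : IsUnit (a * p + (1 - p)) := by
  have := hab.isDedekindFiniteMonoid
  have hpa : p * a * p = a * p := by rw [hab p hp a, mul_assoc, hp.eq]
  have hpa' : (1 - p) * a * p = 0 := by
    rw [mul_assoc, ← hab p hp a, ← mul_assoc, hp.one_sub_mul_self, zero_mul]
  refine IsUnit.of_mul_eq_one_right (g * p + (1 - p)) ?_
  calc _ = g * (p * a * p) + g * (p * (1 - p)) + (1 - p) * a * p + (1 - p) * (1 - p) := by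
        noncomm_ring
    _ = 1 := by
      rw [hpa, hp.mul_one_sub_self, hpa', hp.one_sub.eq, ← mul_assoc, h]; noncomm_ring

lemma Ideal.IsMaximal.mem_or_one_sub_mem {M : Ideal R} (hM : M.IsMaximal) {f : R}
    (hf : IsIdempotentElem f) (hfc : ∀ x, f * x = x * f) : f ∈ M ∨ 1 - f ∈ M := by
  refine or_iff_not_imp_left.2 fun hfM => ?_
  obtain ⟨y, i, hi, hyi⟩ := hM.exists_inv hfM
  have : 1 - f = (1 - f) * i := by
    calc 1 - f = (y * f + i) * (1 - f) := by rw [hyi, one_mul]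
      _ = y * (f * (1 - f)) + (i - i * f) := by noncomm_ring
      _ = (1 - f) * i := by rw [hf.mul_one_sub_self, ← hfc i]; noncomm_ring
  exact this ▸ M.mul_mem_left _ hi

end Ring

section MaximalIdeal

variable {R : Type*} [Ring R] {M : Ideal R}

lemma exists_isIdempotentElem_mem_mul_mul_one_sub_eq (hab : AbelianRing R)
    (hupc : UniquelyPiClean R) (hM : M.IsMaximal) {a : R} (ha : a ∉ M) :
    ∃ f ∈ M, IsIdempotentElem f ∧ ∃ g, g * a * (1 - f) = 1 - f := by
  obtain ⟨r, i, hi, hri⟩ := hM.exists_inv ha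
  obtain ⟨t, ht, f, ⟨hf, V, hV⟩, -⟩ := hupc (r * a)
  have hfM : f ∈ M := by
    refine (hM.mem_or_one_sub_mem hf (hab f hf)).resolve_right fun h1f =>
      hM.ne_top (M.eq_top_of_isUnit_mem ?_ V.isUnit)
    have hy : r * a - 1 ∈ M := by
      rw [← hri, sub_add_cancel_left]
      exact M.neg_mem hi
    have hyt : (r * a) ^ t - 1 ∈ M := by
      rw [← geom_sum_mul]
      exact M.mul_mem_left _ hy
    rw [hV, ← sub_add_sub_cancel _ (1 : R) f]
    exact M.add_mem hyt h1f
  refine ⟨f, hfM, hf, ↑V⁻¹ * (r * a) ^ (t - 1) * r, ?_⟩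
  calc ↑V⁻¹ * (r * a) ^ (t - 1) * r * a * (1 - f) = ↑V⁻¹ * (r * a) ^ t * (1 - f) := by
        rw [← pow_sub_one_mul (by omega : t ≠ 0)]; noncomm_ring
    _ = ↑V⁻¹ * (↑V + f) * (1 - f) := by rw [hV, sub_add_cancel]
    _ = 1 - f := by rw [mul_add, Units.inv_mul, add_mul, mul_assoc, hf.mul_one_sub_self,
        mul_zero, one_mul, add_zero]

lemma one_sub_mem_of_isIdempotentElem_mem (hab : AbelianRing R) (hupc : UniquelyPiClean R)
    (hM : M.IsMaximal) {b e : R} (hb : UniquelyCleanElem b) (he : IsIdempotentElem e)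
    (hu : IsUnit (b - e)) (heM : e ∈ M) : 1 - b ∈ M := by
  by_contra hbM
  obtain ⟨f, hfM, hf, g, hg⟩ := exists_isIdempotentElem_mem_mul_mul_one_sub_eq hab hupc hM
    (a := b - 1) (by rwa [← neg_sub, M.neg_mem_iff])
  set p := (1 - e) * (1 - f) with hpdef
  have hp : IsIdempotentElem p := he.one_sub.mul_of_commute (hab _ he.one_sub _) hf.one_sub
  have hep : e * p = 0 := by rw [← mul_assoc, he.mul_one_sub_self, zero_mul]
  have hB : IsUnit (b - (e + p)) := by
    refine isUnit_of_isUnit_mul_add_one_sub hp (hab p hp) ?_ ?_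
    · rw [show (b - (e + p)) * p = (b - 1) * p by
        rw [sub_mul, add_mul, hep, hp.eq, zero_add, sub_mul, one_mul]]
      refine hab.isUnit_mul_add_one_sub hp (g := g) ?_
      rw [hpdef, hab _ he.one_sub, ← mul_assoc, hg]
    · rw [show (b - (e + p)) * (1 - p) = (b - e) * (1 - p) by
        rw [← sub_sub, sub_mul, hp.mul_one_sub_self, sub_zero]]
      simpa using hab.isUnit_mul_add_one_sub hp.one_sub (g := ↑hu.unit⁻¹)
        (by rw [hu.val_inv_mul, one_mul])
  have hp0 : p = 0 := by
    have hidem : IsIdempotentElem (e + p) := he.add hp (by rw [hep, hab p hp e, hep, add_zero])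
    have := ExistsUnique.unique hb ⟨hidem, hB⟩ ⟨he, hu⟩
    rwa [add_eq_left] at this
  refine hM.ne_top ((M.eq_top_iff_one).2 ?_)
  have : (1 : R) = e + (1 - e) * f := by
    rw [hpdef, mul_sub, mul_one, sub_eq_zero] at hp0
    rw [← hp0]; abel
  exact this ▸ M.add_mem heM (M.mul_mem_left _ hfM)

lemma mem_or_one_sub_mem_of_uniquelyCleanElem (hab : AbelianRing R) (hupc : UniquelyPiClean R)
    (hM : M.IsMaximal) {b : R} (hb : UniquelyCleanElem b) : b ∈ M ∨ 1 - b ∈ M := by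
  obtain ⟨e, ⟨he, hu⟩, -⟩ := id hb
  rcases hM.mem_or_one_sub_mem he (hab e he) with heM | heM
  · exact .inr (one_sub_mem_of_isIdempotentElem_mem hab hupc hM hb he hu heM)
  · have hu' : IsUnit (1 - b - (1 - e)) := by
      rw [sub_sub_sub_cancel_left, ← neg_sub]
      exact hu.neg
    have := one_sub_mem_of_isIdempotentElem_mem hab hupc hM hb.one_sub he.one_sub hu' heM
    rw [sub_sub_cancel] at this
    exact .inl this

end MaximalIdeal

lemma sub_mul_self_mem_jacobson_bot {R : Type*} [Ring R] (hab : AbelianRing R)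
    (hupc : UniquelyPiClean R) {b : R} (hb : UniquelyCleanElem b) :
    b - b * b ∈ (⊥ : Ideal R).jacobson := by
  refine Ideal.mem_sInf.2 fun M hM => ?_
  rcases mem_or_one_sub_mem_of_uniquelyCleanElem hab hupc hM.2 hb with h | h
  · rw [show b - b * b = (1 - b) * b by noncomm_ring]
    exact M.mul_mem_left _ h
  · rw [show b - b * b = b * (1 - b) by noncomm_ring]
    exact M.mul_mem_left _ h

section CommRing

variable {A : Type*} [CommRing A] {q : ℕ}

lemma sq_dvd_one_add_pow_sub_one (hq : (q : A) = 0) (z : A) : z ^ 2 ∣ (1 + z) ^ q - 1 := by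
  simpa [hq, add_comm] using sq_dvd_add_pow_sub_sub z 1 q

lemma pow_two_pow_dvd_one_add_pow_pow_sub_one (hq : (q : A) = 0) (x : A) (j : ℕ) :
    x ^ 2 ^ j ∣ (1 + x) ^ q ^ j - 1 := by
  induction j with
  | zero => simp
  | succ j ih =>
    obtain ⟨y, hy⟩ := ih
    rw [pow_succ q, pow_mul, sub_eq_iff_eq_add'.1 hy]
    refine dvd_trans ⟨y ^ 2, ?_⟩ (sq_dvd_one_add_pow_sub_one hq _)
    ring

lemma pow_add_pow_eq_pow_of_natCast_eq_zero (hq : (q : A) = 0) {b : A} {k : ℕ}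
    (hb : (b * (b - 1)) ^ k = 0) : b ^ (k + q ^ k) = b ^ k := by
  obtain ⟨y, hy⟩ := pow_two_pow_dvd_one_add_pow_pow_sub_one hq (b - 1) k
  rw [add_sub_cancel] at hy
  calc b ^ (k + q ^ k) = b ^ k + b ^ k * (b ^ q ^ k - 1) := by ring
    _ = b ^ k + (b * (b - 1)) ^ k * ((b - 1) ^ (2 ^ k - k) * y) := by
      rw [hy, ← pow_mul_pow_sub (b - 1) Nat.lt_two_pow_self.le, mul_pow]; ring
    _ = b ^ k := by rw [hb]; ring

end CommRing

section Ring

variable {R : Type*} [Ring R]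

open scoped IsMulCommutative in
lemma isPeriodicElem_of_isNilpotent_sub_mul_self {q : ℕ} (hq0 : q ≠ 0) (hq : (q : R) = 0)
    {b : R} (hb : IsNilpotent (b - b * b)) : IsPeriodicElem b := by
  obtain ⟨k, hk⟩ : IsNilpotent (b * (b - 1)) := by
    rw [show b * (b - 1) = -(b - b * b) by noncomm_ring]
    exact hb.neg
  have hk' : (b * (b - 1)) ^ (k + 1) = 0 := by rw [pow_succ, hk, zero_mul]
  refine ⟨k + 1, q ^ (k + 1), k.succ_pos, pow_pos (Nat.pos_of_ne_zero hq0) _, ?_⟩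
  let b' : Algebra.adjoin ℤ ({b} : Set R) := ⟨b, Algebra.self_mem_adjoin_singleton ℤ b⟩
  exact congrArg Subtype.val <| pow_add_pow_eq_pow_of_natCast_eq_zero (b := b')
    (Subtype.ext (by simpa using hq)) (Subtype.ext (by simpa using hk'))

lemma exists_natCast_eq_zero_of_isNilpotent_sub_mul_self {m : ℕ} (hm : 2 ≤ m)
    (h : IsNilpotent ((m : R) - m * m)) : ∃ q : ℕ, q ≠ 0 ∧ (q : R) = 0 := by
  rw [show (m : R) - m * m = -((m * m - m : ℕ) : R) by
    rw [Nat.cast_sub (Nat.le_mul_self m)]; push_cast; abel, isNilpotent_neg_iff] at h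
  obtain ⟨k, hk⟩ := h
  exact ⟨(m * m - m) ^ k, pow_ne_zero _ (Nat.sub_ne_zero_of_lt (by nlinarith)), by
    rw [Nat.cast_pow, hk]⟩

end Ring

theorem stmt17 {R : Type*} [Ring R] :
    (UniquelyPiClean R ∧ ∀ x ∈ (⊥ : Ideal R).jacobson, IsNilpotent x) ↔
      (AbelianRing R ∧ PeriodicRing R) := by
  constructor
  · rintro ⟨hupc, hJ⟩
    have hab := abelianRing_of_uniquelyPiClean hupc
    have hnil (b : R) (hb : UniquelyCleanElem b) : IsNilpotent (b - b * b) :=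
      hJ _ (sub_mul_self_mem_jacobson_bot hab hupc hb)
    obtain ⟨n, hn, h2⟩ := hupc 2
    obtain ⟨q, hq0, hq⟩ := exists_natCast_eq_zero_of_isNilpotent_sub_mul_self (R := R)
      (m := 2 ^ n) (Nat.le_self_pow (by omega) 2) (by simpa using hnil _ h2)
    refine ⟨hab, periodicRing_iff.2 fun a => ?_⟩
    obtain ⟨t, ht, ha⟩ := hupc a
    exact (isPeriodicElem_of_isNilpotent_sub_mul_self hq0 hq (hnil _ ha)).of_pow ht
  · rintro ⟨hab, hper⟩
    exact ⟨uniquelyPiClean_of_abelianRing_of_periodicRing hab hper,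
      fun x hx => (periodicRing_iff.1 hper x).isNilpotent_of_mem_jacobson hx⟩
end
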